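/- Let m ≥ 2, let c ≤ d be real numbers, and let a_1 ≥ … ≥ a_m and b_1 ≥ … ≥ b_m be real numbers, all strictly less than c, such that the vector (a_1,…,a_m) majorizes (b_1,…,b_m) and the two decreasing vectors are distinct. Then the rational function Q(x) := ∏_{j=1}^{m} (x − b_j)/(x − a_j) satisfies Q'(x) < 0 for every x ∈ [c, d]. -/

import Mathlib

/-!
Logarithmic differentiation gives `Q' x = Q x * ∑ j, ((x - b j)⁻¹ - (x - a j)⁻¹)` with `Q x > 0`,
so it suffices that `∑ j, (x - b j)⁻¹ < ∑ j, (x - a j)⁻¹`. For `f t = (x - t)⁻¹` the tangent-line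
identity `f a - f b = f' b * (a - b) + (a - b)² / ((x - a) (x - b)²)` splits the difference into a
linear part, nonnegative by Abel summation since the weights `f' (b j)` decrease in `j` and `a`
majorizes `b`, and a quadratic part, positive since `a ≠ b`.
-/

open Finset

theorem HasDerivAt.fun_finsetProd_of_logDeriv {𝕜 𝔸 ι : Type*} [NontriviallyNormedField 𝕜]
    [NormedCommRing 𝔸] [NormedAlgebra 𝕜 𝔸] {u : Finset ι} {f : ι → 𝕜 → 𝔸} {g : ι → 𝔸} {x : 𝕜}
    (hf : ∀ i ∈ u, HasDerivAt (f i) (f i x * g i) x) :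
    HasDerivAt (∏ i ∈ u, f i ·) ((∏ i ∈ u, f i x) * ∑ i ∈ u, g i) x := by
  classical
  convert HasDerivAt.fun_finsetProd hf using 1
  rw [mul_sum]
  refine sum_congr rfl fun i hi => ?_
  rw [← mul_prod_erase u (f · x) hi, smul_eq_mul]
  ring

theorem hasDerivAt_sub_div_sub {a b x : ℝ} (hxa : x ≠ a) (hxb : x ≠ b) :
    HasDerivAt (fun y => (y - b) / (y - a)) ((x - b) / (x - a) * ((x - b)⁻¹ - (x - a)⁻¹)) x := by
  have hxa' := sub_ne_zero.2 hxa
  have hxb' := sub_ne_zero.2 hxb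
  refine (((hasDerivAt_id' x).sub_const b).fun_div ((hasDerivAt_id' x).sub_const a)
    hxa').congr_deriv ?_
  field_simp

theorem sum_range_mul_nonneg_of_antitoneOn {n : ℕ} {w d : ℕ → ℝ} (hw : AntitoneOn w (Set.Iio n))
    (hd : ∀ k ≤ n, 0 ≤ ∑ i ∈ range k, d i) (hdn : ∑ i ∈ range n, d i = 0) :
    0 ≤ ∑ i ∈ range n, w i * d i := by
  have hparts := sum_range_by_parts w d n
  simp only [smul_eq_mul] at hparts
  rw [hparts, hdn, mul_zero, zero_sub, neg_nonneg]
  refine sum_nonpos fun i hi => ?_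
  have hi' : i + 1 < n := by grind
  exact mul_nonpos_of_nonpos_of_nonneg
    (sub_nonpos.2 (hw (show i < n by omega) hi' i.le_succ)) (hd _ hi'.le)

theorem Fin.sum_filter_val_lt_eq_sum_range {M : Type*} [AddCommMonoid M] {m k : ℕ} (hk : k ≤ m)
    (f : Fin m → M) :
    ∑ j ∈ univ.filter (fun j : Fin m => (j : ℕ) < k), f j
      = ∑ i ∈ range k, if h : i < m then f ⟨i, h⟩ else 0 := by
  rw [sum_filter, sum_fin_eq_sum_range, ← sum_range_add_sum_Ico _ hk,
    sum_eq_zero (s := Ico k m) fun _ _ => by grind, add_zero]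
  exact sum_congr rfl fun _ _ => by grind

theorem Fin.sum_mul_le_sum_mul_of_antitone {m : ℕ} {w a b : Fin m → ℝ} (hw : Antitone w)
    (hmaj : ∀ k ≤ m,
      ∑ j ∈ univ.filter (fun j : Fin m => (j : ℕ) < k), b j ≤
        ∑ j ∈ univ.filter (fun j : Fin m => (j : ℕ) < k), a j)
    (htot : ∑ j, a j = ∑ j, b j) :
    ∑ j, w j * b j ≤ ∑ j, w j * a j := by
  let extend (f : Fin m → ℝ) (i : ℕ) : ℝ := if h : i < m then f ⟨i, h⟩ else 0
  have hw' : AntitoneOn (extend w) (Set.Iio m) := fun i hi j hj hij => by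
    simpa [extend, show i < m from hi, show j < m from hj] using hw (Fin.mk_le_mk.2 hij)
  have hpartial : ∀ k ≤ m, 0 ≤ ∑ i ∈ range k, extend (a - b) i := fun k hk => by
    simp only [extend]
    rw [← Fin.sum_filter_val_lt_eq_sum_range hk]
    simpa only [Pi.sub_apply, sum_sub_distrib, sub_nonneg] using hmaj k hk
  have htotal : ∑ i ∈ range m, extend (a - b) i = 0 := by
    simp only [extend]
    rw [← sum_fin_eq_sum_range]
    simp only [Pi.sub_apply, sum_sub_distrib, htot, sub_self]
  have key := sum_range_mul_nonneg_of_antitoneOn hw' hpartial htotal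
  rw [← sub_nonneg, ← sum_sub_distrib]
  convert key using 1
  rw [sum_fin_eq_sum_range]
  refine sum_congr rfl fun i _ => ?_
  by_cases hi : i < m <;> simp [extend, hi, mul_sub]

theorem sum_inv_sub_lt_sum_inv_sub_of_majorizes {m : ℕ} {a b : Fin m → ℝ} {x : ℝ}
    (hb : Antitone b)
    (hmaj : ∀ k ≤ m,
      ∑ j ∈ univ.filter (fun j : Fin m => (j : ℕ) < k), b j ≤
        ∑ j ∈ univ.filter (fun j : Fin m => (j : ℕ) < k), a j)
    (htot : ∑ j, a j = ∑ j, b j) (hne : a ≠ b) (hax : ∀ j, a j < x) (hbx : ∀ j, b j < x) :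
    ∑ j, (x - b j)⁻¹ < ∑ j, (x - a j)⁻¹ := by
  have hxa j : 0 < x - a j := sub_pos.2 (hax j)
  have hxb j : 0 < x - b j := sub_pos.2 (hbx j)
  have htangent j : (x - a j)⁻¹ - (x - b j)⁻¹
      = ((x - b j) ^ 2)⁻¹ * (a j - b j) + (a j - b j) ^ 2 / ((x - a j) * (x - b j) ^ 2) := by
    have := (hxa j).ne'
    have := (hxb j).ne'
    field_simp
    ring
  have hlinear : 0 ≤ ∑ j, ((x - b j) ^ 2)⁻¹ * (a j - b j) := by
    have hw : Antitone fun j => ((x - b j) ^ 2)⁻¹ := fun i j hij =>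
      inv_anti₀ (pow_pos (hxb i) 2) (pow_le_pow_left₀ (hxb i).le (by linarith [hb hij]) 2)
    simpa only [mul_sub, sum_sub_distrib, sub_nonneg] using
      Fin.sum_mul_le_sum_mul_of_antitone hw hmaj htot
  have hquad : 0 < ∑ j, (a j - b j) ^ 2 / ((x - a j) * (x - b j) ^ 2) := by
    obtain ⟨j, hj⟩ := Function.ne_iff.1 hne
    refine sum_pos' (fun i _ => ?_) ⟨j, mem_univ j, ?_⟩
    · have := hxa i
      positivity
    · have := hxa j
      have := hxb j
      have := sub_ne_zero.2 hj
      positivity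
  rw [← sub_pos, ← sum_sub_distrib]
  simp only [htangent, sum_add_distrib]
  exact add_pos_of_nonneg_of_pos hlinear hquad

theorem quotient_of_majorizing_roots_decreasing_general
    (m : ℕ) (c d : ℝ) (a b : Fin m → ℝ)
    (hb : Antitone b)
    (hac : ∀ j, a j < c) (hbc : ∀ j, b j < c)
    (hmaj : ∀ k ≤ m,
      ∑ j ∈ univ.filter (fun j : Fin m => (j : ℕ) < k), b j ≤
        ∑ j ∈ univ.filter (fun j : Fin m => (j : ℕ) < k), a j)
    (htot : ∑ j, a j = ∑ j, b j)
    (hne : a ≠ b) :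
    ∀ x ∈ Set.Icc c d, ∃ Q' : ℝ,
      HasDerivAt (fun y => ∏ j, (y - b j) / (y - a j)) Q' x ∧ Q' < 0 := by
  rintro x ⟨hcx, -⟩
  have hax j : a j < x := (hac j).trans_le hcx
  have hbx j : b j < x := (hbc j).trans_le hcx
  refine ⟨_, HasDerivAt.fun_finsetProd_of_logDeriv fun j _ =>
    hasDerivAt_sub_div_sub (hax j).ne' (hbx j).ne', ?_⟩
  have hQ : 0 < ∏ j, (x - b j) / (x - a j) :=
    prod_pos fun j _ => div_pos (sub_pos.2 (hbx j)) (sub_pos.2 (hax j))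
  have hsum := sum_inv_sub_lt_sum_inv_sub_of_majorizes hb hmaj htot hne hax hbx
  refine mul_neg_of_pos_of_neg hQ ?_
  rw [sum_sub_distrib]
  linarith

/-- **The quotient `Q(x) = ∏ (x − bⱼ)/(x − aⱼ)` is strictly decreasing.**
Let `m ≥ 2`, let `c ≤ d` be reals, and let `a₁ ≥ … ≥ a_m` and `b₁ ≥ … ≥ b_m` be
reals, all `< c`, such that `a` majorizes `b` and the decreasing vectors are
distinct.  Then `Q(x) := ∏_{j=1}^{m} (x − bⱼ)/(x − aⱼ)` has negative derivative at
every `x ∈ [c, d]`. -/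
theorem quotient_of_majorizing_roots_decreasing
    (m : ℕ) (hm : 2 ≤ m) (c d : ℝ) (hcd : c ≤ d) (a b : Fin m → ℝ)
    (ha : Antitone a) (hb : Antitone b)
    (hac : ∀ j, a j < c) (hbc : ∀ j, b j < c)
    (hmaj : ∀ k ≤ m,
      ∑ j ∈ univ.filter (fun j : Fin m => (j : ℕ) < k), b j ≤
        ∑ j ∈ univ.filter (fun j : Fin m => (j : ℕ) < k), a j)
    (htot : ∑ j, a j = ∑ j, b j)
    (hne : a ≠ b) :
    ∀ x ∈ Set.Icc c d, ∃ Q' : ℝ,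
      HasDerivAt (fun y => ∏ j, (y - b j) / (y - a j)) Q' x ∧ Q' < 0 :=
  quotient_of_majorizing_roots_decreasing_general m c d a b hb hac hbc hmaj htot hne
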